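/- Let m, n be positive integers with n dividing m, set r = m/n and ε = exp(2πi/m), and let k₁, k₂ be integers with 0 ≤ k₁, k₂ ≤ r−1 satisfying 1 + k₁ + k₁² ≡ 0 (mod r), 1 + k₂ + k₂² ≡ 0 (mod r) and 1 + k₁ + k₂ = r. Then conjugation by B maps C_{m,n}^{(k₁)} onto C_{m,n}^{(k₂)}, i.e. B · C_{m,n}^{(k₁)} · B⁻¹ = C_{m,n}^{(k₂)}; in particular the map M ↦ B M B⁻¹ is a group isomorphism from C_{m,n}^{(k₁)} onto C_{m,n}^{(k₂)}. -/

import Mathlib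

open Matrix Complex

noncomputable section

/-- The group `SU(3)`: 3×3 complex unitary matrices of determinant 1. -/
abbrev SU3 : Type := ↥(Matrix.specialUnitaryGroup (Fin 3) ℂ)

noncomputable instance : Group SU3 :=
  { (inferInstance : Monoid SU3) with
    inv := fun A => ⟨star A.val,
      ⟨Unitary.star_mem A.2.1, by
        have h2 : A.val.det = 1 := A.2.2
        show Matrix.detMonoidHom (star A.val) = 1
        show (star A.val).det = 1
        rw [Matrix.star_eq_conjTranspose, Matrix.det_conjTranspose, h2, star_one]⟩⟩
    inv_mul_cancel := fun A => Subtype.ext A.2.1.1 }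

/-- The matrix `E` with rows (0,1,0), (0,0,1), (1,0,0). -/
def EM : Matrix (Fin 3) (Fin 3) ℂ := !![0, 1, 0; 0, 0, 1; 1, 0, 0]

/-- The matrix `B` with rows (-1,0,0), (0,0,-1), (0,-1,0). -/
def BM : Matrix (Fin 3) (Fin 3) ℂ := !![-1, 0, 0; 0, 0, -1; 0, -1, 0]

/-- `ε = exp(2πi/m)`. -/
def eps (m : ℕ) : ℂ := Complex.exp (2 * Real.pi * Complex.I / m)

/-- The diagonal matrix `F = diag(ε, ε^k, ε^(-k-1))` with `ε = exp(2πi/m)`. -/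
def FM (m : ℕ) (k : ℤ) : Matrix (Fin 3) (Fin 3) ℂ :=
  Matrix.diagonal ![eps m, eps m ^ k, eps m ^ (-k - 1)]

/-- The diagonal matrix `G = diag(1, ε^(-r), ε^r)` with `ε = exp(2πi/m)`. -/
def GM (m r : ℕ) : Matrix (Fin 3) (Fin 3) ℂ :=
  Matrix.diagonal ![1, eps m ^ (-(r : ℤ)), eps m ^ (r : ℤ)]

/-! Conjugation by `B` fixes the first coordinate and swaps the other two, so it sends `E` to
`E²`, `G` to `G⁻¹`, and, because `1 + k₁ + k₂ = r`, the matrix `F` of parameter `k₁` to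
`F G` with `F` of parameter `k₂`. Since `E³ = 1`, the elements `E²`, `F G`, `G⁻¹` generate the
same subgroup as `E`, `F`, `G`. -/

theorem Subgroup.closure_sq_mul_inv_eq {G : Type*} [Group G] {e f g : G} (he : e ^ 3 = 1) :
    closure ({e ^ 2, f * g, g⁻¹} : Set G) = closure {e, f, g} := by
  apply le_antisymm <;>
    simp only [closure_le, Set.insert_subset_iff, Set.singleton_subset_iff, SetLike.mem_coe]
  · exact ⟨pow_mem (subset_closure (by simp)) 2,
      mul_mem (subset_closure (by simp)) (subset_closure (by simp)),
      inv_mem (subset_closure (by simp))⟩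
  · have hsq : e ^ 2 ∈ closure ({e ^ 2, f * g, g⁻¹} : Set G) := subset_closure (by simp)
    have hfg : f * g ∈ closure ({e ^ 2, f * g, g⁻¹} : Set G) := subset_closure (by simp)
    have hginv : g⁻¹ ∈ closure ({e ^ 2, f * g, g⁻¹} : Set G) := subset_closure (by simp)
    have he4 : (e ^ 2) ^ 2 = e := by
      rw [← pow_mul, show 2 * 2 = 3 + 1 from rfl, pow_succ, he, one_mul]
    exact ⟨by simpa only [he4] using pow_mem hsq 2, by simpa using mul_mem hfg hginv,
      by simpa using inv_mem hginv⟩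

theorem Subgroup.map_closure_triple_eq {G : Type*} [Group G] (φ : G →* G) {e f₁ f₂ g : G}
    (he : e ^ 3 = 1) (hφe : φ e = e ^ 2) (hφf : φ f₁ = f₂ * g) (hφg : φ g = g⁻¹) :
    (closure ({e, f₁, g} : Set G)).map φ = closure {e, f₂, g} := by
  rw [MonoidHom.map_closure, Set.image_insert_eq, Set.image_insert_eq, Set.image_singleton,
    hφe, hφf, hφg, closure_sq_mul_inv_eq he]

theorem star_BM : star BM = BM := by
  simp [BM, star_eq_conjTranspose, ← Matrix.ext_iff, Fin.forall_fin_succ]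

theorem EM_pow_three : EM ^ 3 = 1 := by
  simp [EM, pow_succ, one_fin_three]

theorem BM_mul_EM_mul_BM : BM * EM * BM = EM ^ 2 := by
  simp [BM, EM, sq]

theorem BM_mul_diagonal_mul_BM (a b c : ℂ) :
    BM * diagonal ![a, b, c] * BM = diagonal ![a, c, b] := by
  simp [BM, diagonal_vec3]

theorem BM_mul_FM_mul_BM (m r : ℕ) {k₁ k₂ : ℤ} (hsum : 1 + k₁ + k₂ = r) :
    BM * FM m k₁ * BM = FM m k₂ * GM m r := by
  rw [FM, BM_mul_diagonal_mul_BM, FM, GM, diagonal_mul_diagonal]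
  have hε : eps m ≠ 0 := Complex.exp_ne_zero _
  have h₂ : eps m ^ (-k₁ - 1) = eps m ^ k₂ * eps m ^ (-(r : ℤ)) := by
    rw [← zpow_add₀ hε]; congr 1; omega
  have h₃ : eps m ^ k₁ = eps m ^ (-k₂ - 1) * eps m ^ (r : ℤ) := by
    rw [← zpow_add₀ hε]; congr 1; omega
  congr 1
  funext i
  fin_cases i <;> simp [h₂, h₃]

theorem BM_mul_GM_mul_BM_mul_GM (m r : ℕ) : BM * GM m r * BM * GM m r = 1 := by
  rw [GM, BM_mul_diagonal_mul_BM, diagonal_mul_diagonal, ← diagonal_one]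
  have hε : eps m ≠ 0 := Complex.exp_ne_zero _
  congr 1
  funext i
  fin_cases i <;> simp [hε]

namespace SU3

theorem coe_inv (A : SU3) :
    ((A⁻¹ : SU3) : Matrix (Fin 3) (Fin 3) ℂ) = star (A : Matrix (Fin 3) (Fin 3) ℂ) :=
  rfl

theorem conj_eq_of_coe {B x y : SU3} (hB : (B : Matrix (Fin 3) (Fin 3) ℂ) = BM)
    (h : BM * x * BM = y) : B * x * B⁻¹ = y :=
  Subtype.ext <| by
    rw [Submonoid.coe_mul, Submonoid.coe_mul, coe_inv, hB, star_BM, h]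

end SU3

theorem statement15_general (m n : ℕ)
    (k₁ k₂ : ℤ)
    (hsum : 1 + k₁ + k₂ = ((m / n : ℕ) : ℤ))
    (E B F₁ F₂ G : SU3)
    (hE : (E : Matrix (Fin 3) (Fin 3) ℂ) = EM)
    (hB : (B : Matrix (Fin 3) (Fin 3) ℂ) = BM)
    (hF₁ : (F₁ : Matrix (Fin 3) (Fin 3) ℂ) = FM m k₁)
    (hF₂ : (F₂ : Matrix (Fin 3) (Fin 3) ℂ) = FM m k₂)
    (hG : (G : Matrix (Fin 3) (Fin 3) ℂ) = GM m (m / n)) :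
    (fun x => B * x * B⁻¹) '' (Subgroup.closure ({E, F₁, G} : Set SU3) : Set SU3)
      = (Subgroup.closure ({E, F₂, G} : Set SU3) : Set SU3) ∧
    Nonempty ((Subgroup.closure ({E, F₁, G} : Set SU3)) ≃*
      (Subgroup.closure ({E, F₂, G} : Set SU3))) := by
  have hE3 : E ^ 3 = 1 := Subtype.ext <| by
    rw [SubmonoidClass.coe_pow, hE, EM_pow_three]; rfl
  have hBE : B * E * B⁻¹ = E ^ 2 :=
    SU3.conj_eq_of_coe hB <| by rw [hE, BM_mul_EM_mul_BM, SubmonoidClass.coe_pow, hE]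
  have hBF : B * F₁ * B⁻¹ = F₂ * G :=
    SU3.conj_eq_of_coe hB <| by rw [hF₁, BM_mul_FM_mul_BM m _ hsum, Submonoid.coe_mul, hF₂, hG]
  have hBG : B * G * B⁻¹ = G⁻¹ := eq_inv_of_mul_eq_one_left <| Subtype.ext <| by
    rw [Submonoid.coe_mul, Submonoid.coe_mul, Submonoid.coe_mul, SU3.coe_inv, hB, hG, star_BM,
      BM_mul_GM_mul_BM_mul_GM]; rfl
  have hmap := Subgroup.map_closure_triple_eq (MulAut.conj B).toMonoidHom hE3 hBE hBF hBG
  exact ⟨congrArg SetLike.coe hmap,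
    ⟨((MulAut.conj B).subgroupMap _).trans (MulEquiv.subgroupCongr hmap)⟩⟩

theorem statement15 (m n : ℕ) (hm : 0 < m) (hn : 0 < n) (hnm : n ∣ m)
    (k₁ k₂ : ℤ)
    (hk₁0 : 0 ≤ k₁) (hk₁r : k₁ ≤ ((m / n : ℕ) : ℤ) - 1)
    (hk₂0 : 0 ≤ k₂) (hk₂r : k₂ ≤ ((m / n : ℕ) : ℤ) - 1)
    (hc₁ : ((m / n : ℕ) : ℤ) ∣ 1 + k₁ + k₁ ^ 2)
    (hc₂ : ((m / n : ℕ) : ℤ) ∣ 1 + k₂ + k₂ ^ 2)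
    (hsum : 1 + k₁ + k₂ = ((m / n : ℕ) : ℤ))
    (E B F₁ F₂ G : SU3)
    (hE : (E : Matrix (Fin 3) (Fin 3) ℂ) = EM)
    (hB : (B : Matrix (Fin 3) (Fin 3) ℂ) = BM)
    (hF₁ : (F₁ : Matrix (Fin 3) (Fin 3) ℂ) = FM m k₁)
    (hF₂ : (F₂ : Matrix (Fin 3) (Fin 3) ℂ) = FM m k₂)
    (hG : (G : Matrix (Fin 3) (Fin 3) ℂ) = GM m (m / n)) :
    (fun x => B * x * B⁻¹) '' (Subgroup.closure ({E, F₁, G} : Set SU3) : Set SU3)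
      = (Subgroup.closure ({E, F₂, G} : Set SU3) : Set SU3) ∧
    Nonempty ((Subgroup.closure ({E, F₁, G} : Set SU3)) ≃*
      (Subgroup.closure ({E, F₂, G} : Set SU3))) :=
  statement15_general m n k₁ k₂ hsum E B F₁ F₂ G hE hB hF₁ hF₂ hG

end
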